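/- arXiv:math-ph/0406007 — 6 statements merged into one kernel-verified Lean document; each statement's English description precedes it below -/
import Mathlib

section
/- Define f(β) = 3 ln|β| - (β^2 - β^{-2}) + (1/8)(β^4 - β^{-4}) for |β| ≥ 1. Then as |β| → 1, f(β) = (8/5)(|β|-1)^5 + O((|β|-1)^6). -/
set_option maxHeartbeats 1000000


theorem stmt_4 :
    ∃ C > 0, ∃ ε > 0, ∀ β : ℝ, 1 ≤ |β| → |β| ≤ 1 + ε →
      |(3 * Real.log |β| - (β ^ 2 - β⁻¹ ^ 2) + (1 / 8) * (β ^ 4 - β⁻¹ ^ 4))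
          - (8 / 5) * (|β| - 1) ^ 5| ≤ C * (|β| - 1) ^ 6 := by
  refine ⟨15, by norm_num, 1/2, by norm_num, fun β h1 h2 => ?_⟩
  set t : ℝ := |β| with ht
  have ht0 : (0:ℝ) < t := lt_of_lt_of_le one_pos h1
  have htne : t ≠ 0 := ne_of_gt ht0
  have hb2 : β ^ 2 = t ^ 2 := (sq_abs β).symm
  have hb4 : β ^ 4 = t ^ 4 := by
    have : β ^ 4 = (β ^ 2) ^ 2 := by ring
    rw [this, hb2]; ring
  have hbi2 : β⁻¹ ^ 2 = (t ^ 2)⁻¹ := by rw [inv_pow, hb2]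
  have hbi4 : β⁻¹ ^ 4 = (t ^ 4)⁻¹ := by rw [inv_pow, hb4]
  set u : ℝ := t - 1 with hu
  have hu0 : 0 ≤ u := sub_nonneg.2 h1
  have hu2 : u ≤ 1/2 := by simp only [hu]; linarith
  -- log estimate
  have hx : |(-u)| < 1 := by rw [abs_neg, abs_of_nonneg hu0]; linarith
  have hlog := Real.abs_log_sub_add_sum_range_le hx 5
  have h1mu : Real.log (1 - -u) = Real.log t := by
    have : (1:ℝ) - -u = t := by simp [hu]
    rw [this]
  rw [h1mu] at hlog
  simp only [Finset.sum_range_succ, Finset.sum_range_zero] at hlog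
  rw [abs_neg, abs_of_nonneg hu0] at hlog
  have hden : u ^ 6 / (1 - u) ≤ 2 * u ^ 6 := by
    rw [div_le_iff₀ (by linarith)]
    nlinarith [pow_nonneg hu0 6]
  have hlog2 : |(-u + u^2/2 + (-u)^3/3 + (-u)^4/4 + (-u)^5/5) + Real.log t| ≤ 2 * u ^ 6 := by
    refine le_trans (le_of_eq ?_) (hlog.trans hden)
    congr 1
    push_cast
    ring_nf
  -- rational part identity
  have hkey : (- (t ^ 2 - (t ^ 2)⁻¹) + 1/8 * (t ^ 4 - (t ^ 4)⁻¹)) - 8/5 * u ^ 5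
      - 3 * (-u + u^2/2 + (-u)^3/3 + (-u)^4/4 + (-u)^5/5)
      = - (u ^ 6 * (7/2 + 7*u + 37/8*u^2 + u^3)) / t ^ 4 := by
    have htu : t = 1 + u := by simp [hu]
    field_simp
    rw [htu]; ring
  have hQpos : (0:ℝ) ≤ 7/2 + 7*u + 37/8*u^2 + u^3 := by positivity
  have hQle : 7/2 + 7*u + 37/8*u^2 + u^3 ≤ 9 := by nlinarith
  have ht4 : (1:ℝ) ≤ t ^ 4 := by nlinarith
  have hrat : |(- (t ^ 2 - (t ^ 2)⁻¹) + 1/8 * (t ^ 4 - (t ^ 4)⁻¹)) - 8/5 * u ^ 5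
      - 3 * (-u + u^2/2 + (-u)^3/3 + (-u)^4/4 + (-u)^5/5)| ≤ 9 * u ^ 6 := by
    rw [hkey, abs_div, abs_neg, abs_of_nonneg (by positivity), abs_of_nonneg (by positivity)]
    rw [div_le_iff₀ (by positivity)]
    have h6 : (0:ℝ) ≤ u ^ 6 := by positivity
    calc u ^ 6 * (7/2 + 7*u + 37/8*u^2 + u^3) ≤ u ^ 6 * 9 :=
          mul_le_mul_of_nonneg_left hQle h6
      _ = 9 * u ^ 6 := by ring
      _ ≤ 9 * u ^ 6 * t ^ 4 := le_mul_of_one_le_right (by positivity) ht4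
  -- combine
  have hsplit : (3 * Real.log t - (β ^ 2 - β⁻¹ ^ 2) + (1 / 8) * (β ^ 4 - β⁻¹ ^ 4))
      - (8 / 5) * u ^ 5
      = 3 * ((-u + u^2/2 + (-u)^3/3 + (-u)^4/4 + (-u)^5/5) + Real.log t)
      + ((- (t ^ 2 - (t ^ 2)⁻¹) + 1/8 * (t ^ 4 - (t ^ 4)⁻¹)) - 8/5 * u ^ 5
        - 3 * (-u + u^2/2 + (-u)^3/3 + (-u)^4/4 + (-u)^5/5)) := by
    rw [hb2, hb4, hbi2, hbi4]; ring
  calc |(3 * Real.log t - (β ^ 2 - β⁻¹ ^ 2) + (1 / 8) * (β ^ 4 - β⁻¹ ^ 4)) - (8 / 5) * u ^ 5|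
      ≤ 3 * |(-u + u^2/2 + (-u)^3/3 + (-u)^4/4 + (-u)^5/5) + Real.log t|
        + |(- (t ^ 2 - (t ^ 2)⁻¹) + 1/8 * (t ^ 4 - (t ^ 4)⁻¹)) - 8/5 * u ^ 5
          - 3 * (-u + u^2/2 + (-u)^3/3 + (-u)^4/4 + (-u)^5/5)| := by
        rw [hsplit]
        refine (abs_add_le _ _).trans ?_
        rw [abs_mul, abs_of_nonneg (by norm_num : (0:ℝ) ≤ 3)]
    _ ≤ 3 * (2 * u ^ 6) + 9 * u ^ 6 := by
        gcongr
    _ = 15 * u ^ 6 := by ring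
end

section
/- Define f(β) = 3 ln|β| - (β^2 - β^{-2}) + (1/8)(β^4 - β^{-4}). There exists ε > 0 such that f(β) ≥ 0 for all β with 1 ≤ |β| ≤ 1+ε. -/
noncomputable def gAux (b : ℝ) : ℝ :=
  3 * Real.log b - (b ^ 2 - (b ^ 2)⁻¹) + (1 / 8) * (b ^ 4 - (b ^ 4)⁻¹)

lemma gAux_hasDeriv {b : ℝ} (hb : 0 < b) :
    HasDerivAt gAux ((b ^ 2 - 1) ^ 4 / (2 * b ^ 5)) b := by
  have h1 : HasDerivAt Real.log b⁻¹ b := Real.hasDerivAt_log hb.ne'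
  have h2 : HasDerivAt (fun x : ℝ => x ^ 2) (2 * b) b := by
    simpa using hasDerivAt_pow 2 b
  have h4 : HasDerivAt (fun x : ℝ => x ^ 4) (4 * b ^ 3) b := by
    simpa [mul_comm] using hasDerivAt_pow 4 b
  have h2i : HasDerivAt (fun x : ℝ => (x ^ 2)⁻¹) (-(2 * b) / (b ^ 2) ^ 2) b :=
    h2.inv (by positivity)
  have h4i : HasDerivAt (fun x : ℝ => (x ^ 4)⁻¹) (-(4 * b ^ 3) / (b ^ 4) ^ 2) b :=
    h4.inv (by positivity)
  have h := ((h1.const_mul 3).sub (h2.sub h2i)).add ((h4.sub h4i).const_mul (1 / 8))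
  refine HasDerivAt.congr_deriv (f := gAux) h ?_
  have hb' : b ≠ 0 := hb.ne'
  field_simp
  ring

lemma gAux_nonneg {b : ℝ} (hb : 1 ≤ b) : 0 ≤ gAux b := by
  have hmono : MonotoneOn gAux (Set.Ici (1 : ℝ)) := by
    apply monotoneOn_of_deriv_nonneg (convex_Ici 1)
    · intro x hx
      exact (gAux_hasDeriv (lt_of_lt_of_le one_pos hx)).continuousAt.continuousWithinAt
    · intro x hx
      rw [interior_Ici] at hx
      exact (gAux_hasDeriv (lt_trans one_pos hx)).differentiableAt.differentiableWithinAt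
    · intro x hx
      rw [interior_Ici] at hx
      have hx0 : 0 < x := lt_trans one_pos hx
      rw [(gAux_hasDeriv hx0).deriv]
      positivity
  have h1 : gAux 1 = 0 := by
    simp [gAux]
  have := hmono (Set.self_mem_Ici) (Set.mem_Ici.mpr hb) hb
  linarith [h1 ▸ this]

theorem stmt_5 :
    ∃ ε > 0, ∀ β : ℝ, 1 ≤ |β| → |β| ≤ 1 + ε →
      0 ≤ 3 * Real.log |β| - (β ^ 2 - β⁻¹ ^ 2) + (1 / 8) * (β ^ 4 - β⁻¹ ^ 4) := by
  refine ⟨1, one_pos, fun β h1 _ => ?_⟩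
  have key := gAux_nonneg h1
  have h2 : β ^ 2 = |β| ^ 2 := (sq_abs β).symm
  have h4 : β ^ 4 = |β| ^ 4 := by
    rw [show (4 : ℕ) = 2 * 2 by norm_num, pow_mul, pow_mul, sq_abs]
  have hi2 : β⁻¹ ^ 2 = (|β| ^ 2)⁻¹ := by rw [inv_pow, h2]
  have hi4 : β⁻¹ ^ 4 = (|β| ^ 4)⁻¹ := by rw [inv_pow, h4]
  rw [h2, h4, hi2, hi4]
  simpa [gAux] using key
end

section
/- Let μ be a probability measure on ℝ whose absolutely continuous part on [-2,2] has density μ′, and let w(θ) ≥ 0 be a trigonometric polynomial. Then the positive part of the integral ∫_0^π ln(πμ′(2cosθ)/sinθ) w(θ) dθ is finite; equivalently, Z_w(μ) := -(1/2π)∫_0^π ln(πμ′(2cosθ)/sinθ) w(θ) dθ is bounded below by a finite constant C_w depending only on w. -/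
open MeasureTheory Real

private lemma aux_neg_log_le_rpow {x : ℝ} (hx : 0 < x) :
    -Real.log x ≤ 2 * x ^ (-(1/2) : ℝ) := by
  have h1 : Real.log (x ^ (-(1/2) : ℝ)) = -(1/2) * Real.log x := Real.log_rpow hx _
  have h2 : Real.log (x ^ (-(1/2) : ℝ)) ≤ x ^ (-(1/2) : ℝ) :=
    Real.log_le_self (Real.rpow_nonneg hx.le _)
  nlinarith [Real.rpow_nonneg hx.le (-(1/2) : ℝ)]

private lemma aux_neg_log_sin_le {θ : ℝ} (h : θ ∈ Set.Ioo 0 π) :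
    -Real.log (Real.sin θ) ≤ Real.log (π/2) + 2*θ^(-(1/2):ℝ) + 2*(π-θ)^(-(1/2):ℝ) := by
  obtain ⟨h0, hπ⟩ := h
  have hππ := Real.pi_pos
  have h1 : (0:ℝ) < π - θ := by linarith
  have hr1 : 0 ≤ 2*θ^(-(1/2):ℝ) := by positivity
  have hr2 : 0 ≤ 2*(π-θ)^(-(1/2):ℝ) := by positivity
  rcases le_or_gt θ (π/2) with hc | hc
  · have hs : 2/π * θ ≤ Real.sin θ := Real.mul_le_sin h0.le hc
    have hpos : 0 < 2/π * θ := by positivity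
    have := Real.log_le_log hpos hs
    have hlog : Real.log (2/π * θ) = Real.log (2/π) + Real.log θ :=
      Real.log_mul (by positivity) (ne_of_gt h0)
    have h2 : Real.log (2/π) = - Real.log (π/2) := by
      rw [show (2:ℝ)/π = (π/2)⁻¹ by field_simp, Real.log_inv]
    have h3 : -Real.log θ ≤ 2*θ^(-(1/2):ℝ) := aux_neg_log_le_rpow h0
    linarith
  · have hs : 2/π * (π - θ) ≤ Real.sin θ := by
      have := Real.mul_le_sin h1.le (by linarith)
      rwa [Real.sin_pi_sub] at this
    have hpos : 0 < 2/π * (π - θ) := by positivity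
    have := Real.log_le_log hpos hs
    have hlog : Real.log (2/π * (π - θ)) = Real.log (2/π) + Real.log (π - θ) :=
      Real.log_mul (by positivity) (ne_of_gt h1)
    have h2 : Real.log (2/π) = - Real.log (π/2) := by
      rw [show (2:ℝ)/π = (π/2)⁻¹ by field_simp, Real.log_inv]
    have h3 : -Real.log (π - θ) ≤ 2*(π-θ)^(-(1/2):ℝ) := aux_neg_log_le_rpow h1
    linarith

private lemma aux_integrableOn_neg_log_sin :
    IntegrableOn (fun θ => -Real.log (Real.sin θ)) (Set.Ioo 0 π) volume := by
  have hππ := Real.pi_pos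
  have hb : IntegrableOn (fun θ : ℝ => Real.log (π/2) + 2*θ^(-(1/2):ℝ) + 2*(π-θ)^(-(1/2):ℝ))
      (Set.Ioo 0 π) volume := by
    have h1 : IntegrableOn (fun θ : ℝ => θ ^ (-(1/2):ℝ)) (Set.Ioo 0 π) volume :=
      (intervalIntegrable_iff_integrableOn_Ioo_of_le hππ.le).mp
        (intervalIntegral.intervalIntegrable_rpow' (by norm_num))
    have h2 : IntegrableOn (fun θ : ℝ => (π - θ) ^ (-(1/2):ℝ)) (Set.Ioo 0 π) volume := by
      have := ((intervalIntegral.intervalIntegrable_rpow' (a := 0) (b := π)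
        (r := -(1/2)) (by norm_num)).comp_sub_left π)
      simp only [sub_zero, sub_self] at this
      exact (intervalIntegrable_iff_integrableOn_Ioo_of_le hππ.le).mp this.symm
    exact ((integrableOn_const measure_Ioo_lt_top.ne).add (h1.const_mul 2)).add
      (h2.const_mul 2)
  refine hb.integrable.mono' ?_ ?_
  · exact ((Real.measurable_log.comp Real.measurable_sin).neg).aestronglyMeasurable
  · filter_upwards [ae_restrict_mem measurableSet_Ioo] with θ hθ
    have h0 : 0 < Real.sin θ := Real.sin_pos_of_mem_Ioo hθ
    have h2 : Real.log (Real.sin θ) ≤ 0 := Real.log_nonpos h0.le (Real.sin_le_one θ)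
    rw [Real.norm_eq_abs, abs_of_nonneg (by linarith)]
    exact aux_neg_log_sin_le hθ

private lemma aux_lintegral_density_sin (μ : Measure ℝ) [IsProbabilityMeasure μ] :
    ∫⁻ θ in Set.Ioo (0:ℝ) π,
      ENNReal.ofReal ((μ.rnDeriv volume (2 * Real.cos θ)).toReal * Real.sin θ) < ⊤ := by
  set g : ℝ → ENNReal := fun x => ENNReal.ofReal ((μ.rnDeriv volume x).toReal) with hg
  set f : ℝ → ℝ := fun θ => 2 * Real.cos θ with hf
  set f' : ℝ → ℝ →L[ℝ] ℝ := fun θ => (1 : ℝ →L[ℝ] ℝ).smulRight (-(2 * Real.sin θ)) with hf'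
  have hderiv : ∀ θ ∈ Set.Ioo (0:ℝ) π, HasFDerivWithinAt f (f' θ) (Set.Ioo 0 π) θ := by
    intro θ _
    have h : HasDerivAt f (-(2 * Real.sin θ)) θ := by
      have := (Real.hasDerivAt_cos θ).const_mul 2
      simpa [mul_comm, mul_neg] using this
    exact (hasDerivAt_iff_hasFDerivAt.mp h).hasFDerivWithinAt
  have hinj : Set.InjOn f (Set.Ioo 0 π) := fun a ha b hb hab =>
    Real.strictAntiOn_cos.injOn (Set.Ioo_subset_Icc_self ha) (Set.Ioo_subset_Icc_self hb)
      (mul_left_cancel₀ two_ne_zero hab)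
  have key := lintegral_image_eq_lintegral_abs_det_fderiv_mul volume measurableSet_Ioo hderiv hinj g
  have hle : ∫⁻ θ in Set.Ioo (0:ℝ) π,
      ENNReal.ofReal ((μ.rnDeriv volume (2 * Real.cos θ)).toReal * Real.sin θ)
      ≤ ∫⁻ θ in Set.Ioo (0:ℝ) π, ENNReal.ofReal |(f' θ).det| * g (f θ) := by
    refine setLIntegral_mono ?_ ?_
    · have heq : (fun θ => ENNReal.ofReal |(f' θ).det| * g (f θ))
          = fun θ => ENNReal.ofReal |(-(2 * Real.sin θ))| * g (2 * Real.cos θ) := by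
        funext θ; rw [show (f' θ).det = -(2 * Real.sin θ) from (by simp only [hf', ContinuousLinearMap.smulRight_one_eq_toSpanSingleton, ContinuousLinearMap.det_toSpanSingleton])]
      rw [heq]
      exact ((measurable_const.mul Real.measurable_sin).neg.abs.ennreal_ofReal).mul
        ((μ.measurable_rnDeriv volume).ennreal_toReal.ennreal_ofReal.comp
          (Real.measurable_cos.const_mul 2))
    · intro θ hθ
      have hs : 0 < Real.sin θ := Real.sin_pos_of_mem_Ioo hθ
      have hdet : (f' θ).det = -(2 * Real.sin θ) := (by simp only [hf', ContinuousLinearMap.smulRight_one_eq_toSpanSingleton, ContinuousLinearMap.det_toSpanSingleton])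
      have ha : 0 ≤ (μ.rnDeriv volume (2 * Real.cos θ)).toReal := ENNReal.toReal_nonneg
      rw [hdet, abs_neg, abs_of_nonneg (by positivity), ← ENNReal.ofReal_mul (by positivity)]
      apply ENNReal.ofReal_le_ofReal
      nlinarith
  refine lt_of_le_of_lt hle ?_
  rw [← key]
  calc ∫⁻ x in f '' Set.Ioo 0 π, g x ≤ ∫⁻ x, g x := setLIntegral_le_lintegral _ _
    _ ≤ ∫⁻ x, μ.rnDeriv volume x := lintegral_mono fun x => ENNReal.ofReal_toReal_le
    _ ≤ μ Set.univ := Measure.lintegral_rnDeriv_le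
    _ < ⊤ := measure_lt_top μ _

/-- For a probability measure `μ` on `ℝ` with a.c. density `μ' = dμ/dx` and a
nonnegative trigonometric polynomial `w`, the positive part of
`∫₀^π ln(π μ'(2cos θ)/sin θ) w(θ) dθ` is finite. -/
theorem stmt_9 (μ : Measure ℝ) [IsProbabilityMeasure μ] (k : ℕ) (c : ℕ → ℝ)
    (w : ℝ → ℝ)
    (hw : w = fun θ => ∑ ℓ ∈ Finset.range (k + 1), c ℓ * Real.cos (ℓ * θ))
    (hw0 : ∀ θ : ℝ, 0 ≤ w θ) :
    ∫⁻ θ in Set.Ioo (0 : ℝ) π,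
        ENNReal.ofReal
          (Real.log (π * (μ.rnDeriv volume (2 * Real.cos θ)).toReal / Real.sin θ)
            * w θ) < ⊤ := by
  have hππ := Real.pi_pos
  set C : ℝ := ∑ ℓ ∈ Finset.range (k + 1), |c ℓ| with hCdef
  have hC0 : 0 ≤ C := Finset.sum_nonneg fun _ _ => abs_nonneg _
  have hwC : ∀ θ, w θ ≤ C := by
    intro θ
    rw [hw]
    calc (∑ ℓ ∈ Finset.range (k + 1), c ℓ * Real.cos (ℓ * θ))
        ≤ |∑ ℓ ∈ Finset.range (k + 1), c ℓ * Real.cos (ℓ * θ)| := le_abs_self _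
      _ ≤ ∑ ℓ ∈ Finset.range (k + 1), |c ℓ * Real.cos (ℓ * θ)| :=
          Finset.abs_sum_le_sum_abs _ _
      _ ≤ C := by
          apply Finset.sum_le_sum
          intro ℓ _
          rw [abs_mul]
          calc |c ℓ| * |Real.cos (ℓ * θ)| ≤ |c ℓ| * 1 :=
                mul_le_mul_of_nonneg_left (Real.abs_cos_le_one _) (abs_nonneg _)
            _ = |c ℓ| := mul_one _
  -- pointwise bound
  have hpt : ∀ θ ∈ Set.Ioo (0:ℝ) π,
      ENNReal.ofReal
          (Real.log (π * (μ.rnDeriv volume (2 * Real.cos θ)).toReal / Real.sin θ) * w θ)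
      ≤ ENNReal.ofReal (C * π)
          * ENNReal.ofReal ((μ.rnDeriv volume (2 * Real.cos θ)).toReal * Real.sin θ)
        + ENNReal.ofReal (2 * C) * ENNReal.ofReal (-Real.log (Real.sin θ)) := by
    intro θ hθ
    set A : ℝ := (μ.rnDeriv volume (2 * Real.cos θ)).toReal with hA
    have hA0 : 0 ≤ A := ENNReal.toReal_nonneg
    have hs : 0 < Real.sin θ := Real.sin_pos_of_mem_Ioo hθ
    have hls : Real.log (Real.sin θ) ≤ 0 := Real.log_nonpos hs.le (Real.sin_le_one θ)
    have hL : Real.log (π * A / Real.sin θ) ≤ π * A * Real.sin θ - 2 * Real.log (Real.sin θ) := by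
      rcases eq_or_lt_of_le hA0 with h0 | h0
      · rw [← h0, mul_zero, zero_div, Real.log_zero]
        nlinarith
      · have hπA : 0 < π * A := by positivity
        rw [Real.log_div (ne_of_gt hπA) (ne_of_gt hs)]
        have h1 : Real.log (π * A * Real.sin θ) = Real.log (π * A) + Real.log (Real.sin θ) :=
          Real.log_mul (ne_of_gt hπA) (ne_of_gt hs)
        have h2 : Real.log (π * A * Real.sin θ) ≤ π * A * Real.sin θ :=
          Real.log_le_self (by positivity)
        linarith
    have hreal : Real.log (π * A / Real.sin θ) * w θ
        ≤ C * π * (A * Real.sin θ) + 2 * C * (-Real.log (Real.sin θ)) := by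
      have hRnn : 0 ≤ π * A * Real.sin θ - 2 * Real.log (Real.sin θ) := by
        have h4 : 0 ≤ π * A * Real.sin θ := by positivity
        linarith
      calc Real.log (π * A / Real.sin θ) * w θ
          ≤ (π * A * Real.sin θ - 2 * Real.log (Real.sin θ)) * w θ :=
            mul_le_mul_of_nonneg_right hL (hw0 θ)
        _ ≤ (π * A * Real.sin θ - 2 * Real.log (Real.sin θ)) * C :=
            mul_le_mul_of_nonneg_left (hwC θ) hRnn
        _ = C * π * (A * Real.sin θ) + 2 * C * (-Real.log (Real.sin θ)) := by ring
    calc ENNReal.ofReal (Real.log (π * A / Real.sin θ) * w θ)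
        ≤ ENNReal.ofReal (C * π * (A * Real.sin θ) + 2 * C * (-Real.log (Real.sin θ))) :=
          ENNReal.ofReal_le_ofReal hreal
      _ = ENNReal.ofReal (C * π * (A * Real.sin θ)) + ENNReal.ofReal (2 * C * (-Real.log (Real.sin θ))) := by
          rw [ENNReal.ofReal_add (by positivity)
            (mul_nonneg (by linarith) (by linarith))]
      _ = ENNReal.ofReal (C * π) * ENNReal.ofReal (A * Real.sin θ)
            + ENNReal.ofReal (2 * C) * ENNReal.ofReal (-Real.log (Real.sin θ)) := by
          rw [ENNReal.ofReal_mul (p := C * π) (by positivity),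
            ENNReal.ofReal_mul (p := 2 * C) (by linarith)]
  -- measurability of the bounding function
  have hm1 : Measurable fun θ : ℝ =>
      ENNReal.ofReal ((μ.rnDeriv volume (2 * Real.cos θ)).toReal * Real.sin θ) :=
    (((μ.measurable_rnDeriv volume).ennreal_toReal.comp
      (Real.measurable_cos.const_mul 2)).mul Real.measurable_sin).ennreal_ofReal
  have hm2 : Measurable fun θ : ℝ => ENNReal.ofReal (-Real.log (Real.sin θ)) :=
    ((Real.measurable_log.comp Real.measurable_sin).neg).ennreal_ofReal
  have hle := setLIntegral_mono (μ := volume) (s := Set.Ioo (0:ℝ) π)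
      ((measurable_const.mul hm1).add (measurable_const.mul hm2)) hpt
  simp only [Pi.add_apply, Pi.mul_apply] at hle
  refine lt_of_le_of_lt hle ?_
  rw [lintegral_add_left (hm1.const_mul _),
    lintegral_const_mul _ hm1, lintegral_const_mul _ hm2]
  apply ENNReal.add_lt_top.mpr
  constructor
  · exact ENNReal.mul_lt_top ENNReal.ofReal_lt_top (aux_lintegral_density_sin μ)
  · refine ENNReal.mul_lt_top ENNReal.ofReal_lt_top ?_
    exact aux_integrableOn_neg_log_sin.integrable.lintegral_lt_top
end

section
/- The integral (1/2π)∫_0^{2π} (1 - cosθ) ln|1 + 2e^{iθ} + e^{2iθ}| dθ equals -1. -/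
open Real Complex MeasureTheory intervalIntegral Set


noncomputable def gg (θ : ℝ) : ℝ := Real.log (2 + 2 * Real.cos θ)
noncomputable def GG (t : ℝ) : ℝ := Real.log (2 - 2 * Real.cos t)

lemma log_int01 : IntervalIntegrable Real.log volume 0 1 := by
  rw [intervalIntegrable_iff_integrableOn_Ioc_of_le zero_le_one]
  have h : IntegrableOn (fun x : ℝ => -Real.log x) (Ioc (0:ℝ) 1) volume := by
    apply intervalIntegral.integrableOn_deriv_of_nonneg
      (g := fun x : ℝ => x - x * Real.log x)
    · exact (continuous_id.sub Real.continuous_mul_log).continuousOn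
    · intro x hx
      have h1 := Real.hasDerivAt_mul_log (ne_of_gt hx.1)
      have := (hasDerivAt_id x).sub h1
      exact this.congr_deriv (by ring)
    · intro x hx
      simp only [neg_nonneg]
      exact Real.log_nonpos hx.1.le hx.2.le
  have h2 := h.neg
  exact h2.congr (Filter.Eventually.of_forall (fun x => by simp))

lemma abslog_int {c : ℝ} (hc : 1 ≤ c) :
    IntervalIntegrable (fun x => |Real.log x|) volume 0 c := by
  refine IntervalIntegrable.abs ?_
  refine log_int01.trans (intervalIntegrable_log ?_)
  intro h
  rcases h with h
  simp only [Set.mem_uIcc] at h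
  rcases h with ⟨h1, _⟩ | ⟨_, h2⟩ <;> linarith

lemma GG_eq (t : ℝ) : GG t = 2 * Real.log (2 * Real.sin (t/2)) := by
  unfold GG
  have h : (2:ℝ) - 2 * Real.cos t = (2 * Real.sin (t/2))^2 := by
    have h2 : Real.cos (2 * (t/2)) = 2 * Real.cos (t/2) ^ 2 - 1 := Real.cos_two_mul _
    have h3 : (2:ℝ) * (t/2) = t := by ring
    rw [h3] at h2
    nlinarith [Real.sin_sq_add_cos_sq (t/2)]
  rw [h, Real.log_pow]
  push_cast; ring

lemma gg_eq (t : ℝ) : gg t = 2 * Real.log (2 * Real.cos (t/2)) := by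
  unfold gg
  have h : (2:ℝ) + 2 * Real.cos t = (2 * Real.cos (t/2))^2 := by
    have h2 : Real.cos (2 * (t/2)) = 2 * Real.cos (t/2) ^ 2 - 1 := Real.cos_two_mul _
    have h3 : (2:ℝ) * (t/2) = t := by ring
    rw [h3] at h2
    nlinarith
  rw [h, Real.log_pow]
  push_cast; ring

lemma GG_int0pi : IntervalIntegrable GG volume 0 π := by
  rw [intervalIntegrable_iff_integrableOn_Ioc_of_le Real.pi_pos.le]
  have hdom : IntegrableOn (fun t : ℝ => 4 * |Real.log t| + 2 * Real.log (π/2))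
      (Ioc 0 π) volume := by
    rw [← intervalIntegrable_iff_integrableOn_Ioc_of_le Real.pi_pos.le]
    exact ((abslog_int (by linarith [Real.pi_gt_three])).const_mul 4).add intervalIntegrable_const
  apply Integrable.mono' hdom
  · apply Measurable.aestronglyMeasurable
    unfold GG
    exact Real.measurable_log.comp (by fun_prop)
  · rw [ae_restrict_iff' measurableSet_Ioc]
    filter_upwards with t ht
    have ht0 : 0 < t := ht.1
    have htpi : t ≤ π := ht.2
    have hsl : t / π ≤ Real.sin (t/2) := by
      have := Real.mul_le_sin (x := t/2) (by linarith) (by linarith)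
      calc t / π = 2 / π * (t/2) := by field_simp
        _ ≤ Real.sin (t/2) := this
    have hsu : Real.sin (t/2) ≤ t/2 := Real.sin_le (by linarith)
    have hpos : (0:ℝ) < t / π := div_pos ht0 Real.pi_pos
    -- 2*(t/π) ≤ 2 sin(t/2) ≤ t
    have hA : Real.log (2 * (t/π)) ≤ Real.log (2 * Real.sin (t/2)) :=
      Real.log_le_log (by linarith) (by linarith)
    have hB : Real.log (2 * Real.sin (t/2)) ≤ Real.log t :=
      Real.log_le_log (by nlinarith) (by linarith)
    have hAval : Real.log (2 * (t/π)) = Real.log t - Real.log (π/2) := by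
      rw [show 2 * (t/π) = t / (π/2) by field_simp]
      rw [Real.log_div (ne_of_gt ht0) (by positivity)]
    have hpi2 : 0 ≤ Real.log (π/2) :=
      Real.log_nonneg (by linarith [Real.pi_gt_three])
    have habs : |Real.log (2 * Real.sin (t/2))| ≤ 2 * |Real.log t| + Real.log (π/2) := by
      rw [abs_le]
      constructor
      · have := neg_abs_le (Real.log t)
        nlinarith [hA, hAval, abs_nonneg (Real.log t)]
      · have := le_abs_self (Real.log t)
        nlinarith [hB, abs_nonneg (Real.log t)]
    rw [Real.norm_eq_abs, GG_eq, abs_mul]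
    rw [_root_.abs_of_nonneg (by norm_num : (0:ℝ) ≤ 2)]
    linarith

lemma GG_even (x : ℝ) : GG (-x) = GG x := by unfold GG; rw [Real.cos_neg]

lemma GG_refl (x : ℝ) : GG (2*π - x) = GG x := by unfold GG; rw [Real.cos_two_pi_sub]

lemma gg_GG (x : ℝ) : gg x = GG (x + π) := by
  unfold gg GG
  congr 1
  rw [Real.cos_add]
  simp

lemma gg_GG' (x : ℝ) : gg x = GG (x - π) := by
  unfold gg GG
  congr 1
  rw [Real.cos_sub]
  simp

lemma GG_intneg : IntervalIntegrable GG volume (-π) 0 := by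
  have h := (IntervalIntegrable.iff_comp_neg (f := GG) (a := 0) (b := π)).mp GG_int0pi
  simp only [GG_even, neg_zero] at h
  exact h.symm

lemma GG_intmpp : IntervalIntegrable GG volume (-π) π := GG_intneg.trans GG_int0pi

lemma GG_intpi2pi : IntervalIntegrable GG volume π (2*π) := by
  have h := (GG_int0pi.comp_sub_left (2*π))
  simp only [GG_refl, sub_zero] at h
  have h2 : (2*π - π) = π := by ring
  rw [h2] at h
  exact h.symm

lemma GG_int02pi : IntervalIntegrable GG volume 0 (2*π) := GG_int0pi.trans GG_intpi2pi

lemma gg_int0pi : IntervalIntegrable gg volume 0 π := by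
  have h := GG_intpi2pi.comp_add_right π
  simp only [← gg_GG] at h
  have h1 : π - π = (0:ℝ) := by ring
  have h2 : 2*π - π = π := by ring
  rwa [h1, h2] at h

lemma gg_int02pi : IntervalIntegrable gg volume 0 (2*π) := by
  have h := GG_intmpp.comp_sub_right π
  simp only [← gg_GG'] at h
  have h1 : -π + π = (0:ℝ) := by ring
  have h2 : π + π = 2*π := by ring
  rwa [h1, h2] at h

lemma ae_ne_pi : ∀ᵐ x : ℝ, x ≠ π := by
  rw [MeasureTheory.ae_iff]
  simp only [not_not]
  rw [show {a : ℝ | a = π} = {π} from rfl]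
  simp

lemma J_eq_zero : ∫ x in (0:ℝ)..π, GG x = 0 := by
  have e3 : ∫ x in π..(2*π), GG x = ∫ x in (0:ℝ)..π, GG x := by
    have h := integral_comp_sub_left (a := 0) (b := π) GG (2*π)
    simp only [GG_refl] at h
    rw [show 2*π - π = π by ring, sub_zero] at h
    exact h.symm
  have hdup : ∫ x in (0:ℝ)..π, GG (2*x) = 2⁻¹ * ∫ x in (0:ℝ)..(2*π), GG x := by
    have h := integral_comp_mul_left (a := 0) (b := π) GG (c := 2) two_ne_zero
    simpa using h
  have hsum : ∫ x in (0:ℝ)..π, GG (2*x)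
      = (∫ x in (0:ℝ)..π, GG x) + ∫ x in (0:ℝ)..π, gg x := by
    rw [← integral_add GG_int0pi gg_int0pi]
    apply intervalIntegral.integral_congr_ae
    filter_upwards [ae_ne_pi] with x hxne hx
    rw [Set.uIoc_of_le Real.pi_pos.le] at hx
    have hx0 : 0 < x := hx.1
    have hxlt : x < π := lt_of_le_of_ne hx.2 hxne
    have hcos1 : Real.cos x < 1 := by
      have h := Real.cos_lt_cos_of_nonneg_of_le_pi le_rfl hx.2 hx0
      rwa [Real.cos_zero] at h
    have hcosm : -1 < Real.cos x := by
      have h := Real.cos_lt_cos_of_nonneg_of_le_pi hx0.le le_rfl hxlt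
      rwa [Real.cos_pi] at h
    have h1 : (2:ℝ) - 2*Real.cos x ≠ 0 := by nlinarith
    have h2 : (2:ℝ) + 2*Real.cos x ≠ 0 := by nlinarith
    show GG (2*x) = GG x + gg x
    unfold GG gg
    rw [show (2:ℝ) - 2*Real.cos (2*x) = (2 - 2*Real.cos x) * (2 + 2*Real.cos x) from by
      rw [Real.cos_two_mul]; nlinarith [Real.sin_sq_add_cos_sq x]]
    exact Real.log_mul h1 h2
  have hsplit : ∫ x in (0:ℝ)..(2*π), GG x
      = (∫ x in (0:ℝ)..π, GG x) + ∫ x in π..(2*π), GG x :=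
    (integral_add_adjacent_intervals GG_int0pi GG_intpi2pi).symm
  have hgpi : ∫ x in (0:ℝ)..π, gg x = ∫ x in π..(2*π), GG x := by
    simp only [gg_GG]
    have h := integral_comp_add_right (a := 0) (b := π) GG π
    rwa [zero_add, show π + π = 2*π by ring] at h
  rw [hsplit, e3] at hdup
  rw [hgpi, e3] at hsum
  rw [hsum] at hdup
  linarith

lemma K_eq_zero : ∫ x in (0:ℝ)..(2*π), gg x = 0 := by
  have e1 : ∫ x in (0:ℝ)..(2*π), gg x = ∫ x in (-π)..π, GG x := by
    simp only [gg_GG']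
    have h := integral_comp_sub_right (a := 0) (b := 2*π) GG π
    rwa [zero_sub, show 2*π - π = π by ring] at h
  have e2 : ∫ x in (-π)..(0:ℝ), GG x = ∫ x in (0:ℝ)..π, GG x := by
    have h := integral_comp_neg (a := 0) (b := π) GG
    simp only [GG_even, neg_zero] at h
    exact h.symm
  have hsplit : ∫ x in (-π)..π, GG x
      = (∫ x in (-π)..(0:ℝ), GG x) + ∫ x in (0:ℝ)..π, GG x :=
    (integral_add_adjacent_intervals GG_intneg GG_int0pi).symm
  rw [e1, hsplit, e2, J_eq_zero]
  norm_num

noncomputable def HH (θ : ℝ) : ℝ := Real.sin θ * gg θ + θ - Real.sin θ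

lemma HH_cont : Continuous HH := by
  have hid : HH = fun θ => 2 * Real.sin (θ/2) *
      ((2 * Real.cos (θ/2)) * Real.log (2 * Real.cos (θ/2))) + θ - Real.sin θ := by
    funext θ
    unfold HH
    rw [gg_eq θ]
    have h2 : Real.sin θ = 2 * Real.sin (θ/2) * Real.cos (θ/2) := by
      have := Real.sin_two_mul (θ/2)
      rw [show 2*(θ/2) = θ by ring] at this
      linarith
    rw [h2]; ring
  rw [hid]
  have hc1 : Continuous fun θ : ℝ => Real.sin (θ/2) :=
    Real.continuous_sin.comp (continuous_id.div_const 2)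
  have hc2 : Continuous fun θ : ℝ => (2:ℝ) * Real.cos (θ/2) :=
    continuous_const.mul (Real.continuous_cos.comp (continuous_id.div_const 2))
  exact (((continuous_const.mul hc1).mul
    (Real.continuous_mul_log.comp hc2)).add continuous_id).sub Real.continuous_sin

lemma HH_deriv {x : ℝ} (hx : (2:ℝ) + 2*Real.cos x ≠ 0) :
    HasDerivAt HH (Real.cos x * gg x) x := by
  have h1 : HasDerivAt (fun θ : ℝ => 2 + 2*Real.cos θ) (-(2*Real.sin x)) x := by
    have := ((Real.hasDerivAt_cos x).const_mul (2:ℝ)).const_add (2:ℝ)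
    exact this.congr_deriv (by ring)
  have h2 : HasDerivAt gg (-(2*Real.sin x) / (2 + 2*Real.cos x)) x := h1.log hx
  have h3 : HasDerivAt (fun θ => Real.sin θ * gg θ)
      (Real.cos x * gg x + Real.sin x * (-(2*Real.sin x) / (2 + 2*Real.cos x))) x :=
    (Real.hasDerivAt_sin x).mul h2
  have h4 : HasDerivAt HH
      (Real.cos x * gg x + Real.sin x * (-(2*Real.sin x) / (2 + 2*Real.cos x))
        + 1 - Real.cos x) x :=
    ((h3.add (hasDerivAt_id x)).sub (Real.hasDerivAt_sin x))
  convert h4 using 1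
  have hs := Real.sin_sq_add_cos_sq x
  have hx' : 1 + Real.cos x ≠ 0 := fun h => hx (by linarith)
  field_simp
  nlinarith [hs]

lemma cos_ne_neg {x : ℝ} (h1 : 0 < x) (h2 : x < 2*π) (h3 : x ≠ π) :
    (2:ℝ) + 2*Real.cos x ≠ 0 := by
  rcases lt_or_gt_of_ne h3 with h | h
  · have := Real.cos_lt_cos_of_nonneg_of_le_pi h1.le le_rfl h
    rw [Real.cos_pi] at this
    nlinarith
  · have h4 : 0 < 2*π - x := by linarith
    have h5 : 2*π - x < π := by linarith
    have := Real.cos_lt_cos_of_nonneg_of_le_pi h4.le le_rfl h5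
    rw [Real.cos_pi, Real.cos_two_pi_sub] at this
    nlinarith

lemma cg_int02pi : IntervalIntegrable (fun x => Real.cos x * gg x) volume 0 (2*π) := by
  apply gg_int02pi.abs.mono_fun'
  · apply Measurable.aestronglyMeasurable
    apply Measurable.mul Real.measurable_cos
    unfold gg
    exact Real.measurable_log.comp (by fun_prop)
  · filter_upwards with x
    simp only [Real.norm_eq_abs, abs_mul]
    calc |Real.cos x| * |gg x| ≤ 1 * |gg x| :=
          mul_le_mul_of_nonneg_right (Real.abs_cos_le_one x) (abs_nonneg _)
      _ = |gg x| := one_mul _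

lemma C_eq : ∫ x in (0:ℝ)..(2*π), Real.cos x * gg x = 2*π := by
  have hpi : (0:ℝ) < π := Real.pi_pos
  have hi1 : IntervalIntegrable (fun x => Real.cos x * gg x) volume 0 π := by
    apply cg_int02pi.mono_set'
    rw [Set.uIoc_of_le hpi.le, Set.uIoc_of_le (by linarith)]
    exact Set.Ioc_subset_Ioc le_rfl (by linarith)
  have hi2 : IntervalIntegrable (fun x => Real.cos x * gg x) volume π (2*π) := by
    apply cg_int02pi.mono_set'
    rw [Set.uIoc_of_le (by linarith), Set.uIoc_of_le (by linarith)]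
    exact Set.Ioc_subset_Ioc (by linarith) le_rfl
  have p1 : ∫ x in (0:ℝ)..π, Real.cos x * gg x = HH π - HH 0 := by
    apply integral_eq_sub_of_hasDeriv_right_of_le hpi.le HH_cont.continuousOn _ hi1
    intro x hx
    exact (HH_deriv (cos_ne_neg hx.1 (by linarith [hx.2]) (ne_of_lt hx.2))).hasDerivWithinAt
  have p2 : ∫ x in π..(2*π), Real.cos x * gg x = HH (2*π) - HH π := by
    apply integral_eq_sub_of_hasDeriv_right_of_le (by linarith) HH_cont.continuousOn _ hi2
    intro x hx
    exact (HH_deriv (cos_ne_neg (by linarith [hx.1]) hx.2 (ne_of_gt hx.1))).hasDerivWithinAt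
  have hH0 : HH 0 = 0 := by unfold HH; simp
  have hH2 : HH (2*π) = 2*π := by
    unfold HH
    rw [Real.sin_two_pi]
    ring
  rw [← integral_add_adjacent_intervals hi1 hi2, p1, p2, hH0, hH2]
  ring

lemma myabs_eq (θ : ℝ) :
    ‖(1 + 2 * Complex.exp (θ * Complex.I) + Complex.exp (2 * θ * Complex.I))‖
      = 2 + 2 * Real.cos θ := by
  have hz : Complex.exp (2 * θ * Complex.I)
      = Complex.exp (θ * Complex.I) * Complex.exp (θ * Complex.I) := by
    rw [← Complex.exp_add]
    ring_nf
  have hsq : (1 : ℂ) + 2 * Complex.exp (θ * Complex.I) + Complex.exp (2 * θ * Complex.I)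
      = (1 + Complex.exp (θ * Complex.I)) ^ 2 := by
    rw [hz]; ring
  rw [hsq, norm_pow, Complex.sq_norm, Complex.normSq_apply]
  have hre : (1 + Complex.exp (θ * Complex.I)).re = 1 + Real.cos θ := by
    simp [Complex.exp_ofReal_mul_I_re]
  have him : (1 + Complex.exp (θ * Complex.I)).im = Real.sin θ := by
    simp [Complex.exp_ofReal_mul_I_im]
  rw [hre, him]
  nlinarith [Real.sin_sq_add_cos_sq θ]

theorem stmt_10 :
    (1 / (2 * π)) * ∫ θ in (0 : ℝ)..(2 * π),
        (1 - Real.cos θ) *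
          Real.log (‖(1 + 2 * Complex.exp (θ * Complex.I)
            + Complex.exp (2 * θ * Complex.I))‖) = -1 := by
  have hcongr : ∫ θ in (0 : ℝ)..(2 * π),
      (1 - Real.cos θ) *
        Real.log (‖(1 + 2 * Complex.exp (θ * Complex.I)
          + Complex.exp (2 * θ * Complex.I))‖)
      = ∫ θ in (0 : ℝ)..(2 * π), (gg θ - Real.cos θ * gg θ) := by
    apply integral_congr
    intro θ _
    show (1 - Real.cos θ) * Real.log (‖(1 + 2 * Complex.exp (θ * Complex.I)
          + Complex.exp (2 * θ * Complex.I))‖) = gg θ - Real.cos θ * gg θ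
    rw [myabs_eq θ]
    show (1 - Real.cos θ) * gg θ = gg θ - Real.cos θ * gg θ
    ring
  rw [hcongr, integral_sub gg_int02pi cg_int02pi, K_eq_zero, C_eq]
  have hpi : (0:ℝ) < π := Real.pi_pos
  field_simp
  ring
end

section
/- For the free Jacobi matrix J_0 (off-diagonal entries 1, diagonal 0), all diagonal entries of T_ℓ((1/2) J_0) beyond the ℓ-th are 0, and the sum of the first ℓ-1 diagonal entries of T_ℓ((1/2) J_0) equals -(1/4)(1 + (-1)^ℓ). -/
open Polynomial

/-- Product of two semi-infinite (row/column-finite) matrices. -/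
noncomputable def matMul (A B : ℕ → ℕ → ℝ) : ℕ → ℕ → ℝ :=
  fun i k => ∑' j, A i j * B j k

/-- Powers of a semi-infinite matrix. -/
noncomputable def matPow (A : ℕ → ℕ → ℝ) : ℕ → (ℕ → ℕ → ℝ)
  | 0 => fun i j => if i = j then 1 else 0
  | n + 1 => matMul A (matPow A n)

/-- A polynomial evaluated at a semi-infinite matrix. -/
noncomputable def matEval (p : Polynomial ℝ) (A : ℕ → ℕ → ℝ) : ℕ → ℕ → ℝ :=
  fun i j => ∑ m ∈ Finset.range (p.natDegree + 1), p.coeff m * matPow A m i j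

noncomputable def myE (n j k : ℕ) : ℝ :=
  (1/2) * ((if j = k + n then (1:ℝ) else 0) + (if k = j + n then 1 else 0)
    - (if j + k = n then 1 else 0))

lemma matMul_A (A : ℕ → ℕ → ℝ)
    (hA : ∀ i j, A i j =
      if i ≠ 0 ∧ j ≠ 0 ∧ (i + 1 = j ∨ j + 1 = i) then (1 / 2 : ℝ) else 0)
    (B : ℕ → ℕ → ℝ) (i k : ℕ) :
    matMul A B i k =
      if i = 0 then 0
      else (1/2) * B (i+1) k + (if i = 1 then 0 else (1/2) * B (i-1) k) := by
  unfold matMul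
  rcases Nat.eq_zero_or_pos i with h0 | h0
  · subst h0
    simp only [if_pos rfl]
    have : ∀ j, A 0 j * B j 0 = 0 := by
      intro j; rw [hA]; simp
    calc ∑' j, A 0 j * B j k = ∑' _ : ℕ, (0:ℝ) := by
          congr 1; funext j; rw [hA]; simp
      _ = 0 := tsum_zero
  · rcases eq_or_lt_of_le (Nat.succ_le_of_lt h0) with h1 | h1
    · -- i = 1
      have hi : i = 1 := h1.symm
      subst hi
      rw [tsum_eq_single 2 (by
        intro j hj
        rw [hA]
        have : ¬(1 ≠ 0 ∧ j ≠ 0 ∧ (1 + 1 = j ∨ j + 1 = 1)) := by omega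
        rw [if_neg this, zero_mul])]
      rw [hA]
      have : (1 ≠ 0 ∧ 2 ≠ 0 ∧ (1 + 1 = 2 ∨ 2 + 1 = 1)) := by omega
      rw [if_pos this]
      simp
    · -- i ≥ 2
      have h2 : 2 ≤ i := h1
      rw [tsum_eq_sum (s := {i-1, i+1}) (by
        intro j hj
        simp only [Finset.mem_insert, Finset.mem_singleton] at hj
        push_neg at hj
        rw [hA]
        have : ¬(i ≠ 0 ∧ j ≠ 0 ∧ (i + 1 = j ∨ j + 1 = i)) := by omega
        rw [if_neg this, zero_mul])]
      rw [Finset.sum_pair (by omega)]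
      rw [hA, hA]
      rw [if_pos (by omega), if_pos (by omega)]
      rw [if_neg (show ¬ i = 0 by omega), if_neg (show ¬ i = 1 by omega)]
      ring

lemma matEval_eq (p : Polynomial ℝ) (N : ℕ) (hN : p.natDegree < N)
    (A : ℕ → ℕ → ℝ) (i j : ℕ) :
    matEval p A i j = ∑ m ∈ Finset.range N, p.coeff m * matPow A m i j := by
  unfold matEval
  apply Finset.sum_subset
  · exact Finset.range_subset_range.mpr hN
  · intro m _ hm
    rw [Finset.mem_range, not_lt] at hm
    rw [p.coeff_eq_zero_of_natDegree_lt (by omega), zero_mul]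

lemma Tdeg : ∀ n : ℕ, (Chebyshev.T ℝ (n:ℤ)).natDegree ≤ n := by
  intro n
  induction n using Nat.twoStepInduction with
  | zero => simp [Chebyshev.T_zero]
  | one => simp [Chebyshev.T_one]
  | more n ih1 ih2 =>
    have : ((n:ℤ) + 2) = ((n + 2 : ℕ) : ℤ) := by push_cast; ring
    rw [← this, Chebyshev.T_add_two]
    refine le_trans (natDegree_sub_le _ _) ?_
    refine max_le ?_ (by omega)
    refine le_trans (natDegree_mul_le) ?_
    have h1 : (2 * X : ℝ[X]).natDegree ≤ 1 := by
      refine le_trans (natDegree_mul_le) ?_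
      simp
    have : ((n:ℤ) + 1) = ((n + 1 : ℕ) : ℤ) := by push_cast; ring
    rw [this]
    omega

lemma key (A : ℕ → ℕ → ℝ)
    (hA : ∀ i j, A i j =
      if i ≠ 0 ∧ j ≠ 0 ∧ (i + 1 = j ∨ j + 1 = i) then (1 / 2 : ℝ) else 0) :
    ∀ (n j k : ℕ), 1 ≤ j → matEval (Chebyshev.T ℝ (n:ℤ)) A j k = myE n j k := by
  intro n
  induction n using Nat.twoStepInduction with
  | zero =>
    intro j k hj
    rw [matEval_eq _ 1 (by simpa using Tdeg 0)]
    simp only [Finset.sum_range_one]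
    rw [show ((0:ℕ):ℤ) = 0 from rfl, Chebyshev.T_zero]
    simp only [coeff_one, matPow, myE]
    split_ifs <;> (try norm_num) <;> omega
  | one =>
    intro j k hj
    rw [matEval_eq _ 2 (by simpa using Tdeg 1)]
    rw [show ((1:ℕ):ℤ) = 1 from rfl, Chebyshev.T_one]
    rw [Finset.sum_range_succ, Finset.sum_range_one]
    simp only [coeff_X_zero, coeff_X_one, zero_mul, one_mul, zero_add]
    show matMul A (matPow A 0) j k = _
    rw [matMul_A A hA]
    simp only [matPow, myE]
    split_ifs <;> (try norm_num) <;> omega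
  | more n ih1 ih2 =>
    intro j k hj
    rw [matEval_eq _ (n+3) (by have := Tdeg (n+2); omega)]
    have hcast : ((n + 2 : ℕ) : ℤ) = (n:ℤ) + 2 := by push_cast; ring
    rw [hcast, Chebyshev.T_add_two]
    have hsum : ∀ m, ((2 * X * Chebyshev.T ℝ ((n:ℤ)+1) - Chebyshev.T ℝ (n:ℤ)).coeff m)
        = 2 * ((X * Chebyshev.T ℝ ((n:ℤ)+1)).coeff m) - (Chebyshev.T ℝ (n:ℤ)).coeff m := by
      intro m
      rw [coeff_sub]
      congr 1
      rw [mul_assoc, two_mul, coeff_add]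
      ring
    simp only [hsum]
    simp only [sub_mul, mul_assoc]
    rw [Finset.sum_sub_distrib]
    rw [← Finset.mul_sum]
    have hTn : ∑ m ∈ Finset.range (n+3), (Chebyshev.T ℝ (n:ℤ)).coeff m * matPow A m j k
        = myE n j k := by
      rw [← matEval_eq _ _ (by have := Tdeg n; omega)]
      exact ih1 j k hj
    rw [hTn]
    have hshift : ∑ m ∈ Finset.range (n+3),
        (X * Chebyshev.T ℝ ((n:ℤ)+1)).coeff m * matPow A m j k
        = ∑ m ∈ Finset.range (n+2),
          (Chebyshev.T ℝ ((n:ℤ)+1)).coeff m * matPow A (m+1) j k := by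
      have h3 : n + 3 = (n + 2) + 1 := by omega
      rw [h3, Finset.sum_range_succ']
      simp [coeff_X_mul]
    rw [hshift]
    have hpow : ∀ m, matPow A (m+1) j k
        = (1/2) * matPow A m (j+1) k + (if j = 1 then 0 else (1/2) * matPow A m (j-1) k) := by
      intro m
      show matMul A (matPow A m) j k = _
      rw [matMul_A A hA, if_neg (by omega)]
    simp only [hpow, mul_add, Finset.sum_add_distrib]
    have hcast1 : ((n + 1 : ℕ) : ℤ) = (n:ℤ) + 1 := by push_cast; ring
    have hE1 : ∑ m ∈ Finset.range (n+2),
        (Chebyshev.T ℝ ((n:ℤ)+1)).coeff m * ((1/2) * matPow A m (j+1) k)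
        = (1/2) * myE (n+1) (j+1) k := by
      rw [← ih2 (j+1) k (by omega), matEval_eq _ (n+2) (by have := Tdeg (n+1); rw [hcast1] at *; omega)]
      rw [hcast1, Finset.mul_sum]
      congr 1; funext m; ring
    have hE2 : ∑ m ∈ Finset.range (n+2),
        (Chebyshev.T ℝ ((n:ℤ)+1)).coeff m *
          (if j = 1 then 0 else (1/2) * matPow A m (j-1) k)
        = (if j = 1 then 0 else (1/2) * myE (n+1) (j-1) k) := by
      split_ifs with hj1
      · simp
      · rw [← ih2 (j-1) k (by omega), matEval_eq _ (n+2) (by have := Tdeg (n+1); rw [hcast1] at *; omega)]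
        rw [hcast1, Finset.mul_sum]
        congr 1; funext m; ring
    rw [hE1, hE2]
    -- now pure arithmetic identity on myE
    have hfin : 2 * ((1/2) * myE (n+1) (j+1) k + (if j = 1 then 0 else (1/2) * myE (n+1) (j-1) k))
        - myE n j k = myE (n+2) j k := by
      rcases eq_or_lt_of_le hj with hj1 | hj2
      · -- j = 1
        rw [if_pos hj1.symm]
        subst hj1
        simp only [myE]
        rw [if_congr (show (1:ℕ)+1 = k+(n+1) ↔ (1:ℕ) = k+n by omega) rfl rfl]
        rw [if_congr (show k = 1+1+(n+1) ↔ k = 1+(n+2) by omega) rfl rfl]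
        rw [if_congr (show (1:ℕ)+1+k = n+1 ↔ (1:ℕ)+k = n by omega) rfl rfl]
        rw [if_congr (show k = 1+n ↔ (1:ℕ)+k = n+2 by omega) rfl rfl]
        rw [if_neg (show ¬((1:ℕ) = k+(n+2)) by omega)]
        ring
      · -- j ≥ 2
        have hj2' : 2 ≤ j := hj2
        rw [if_neg (by omega)]
        simp only [myE]
        rw [if_congr (show j+1 = k+(n+1) ↔ j = k+n by omega) rfl rfl]
        rw [if_congr (show k = j+1+(n+1) ↔ k = j+(n+2) by omega) rfl rfl]
        rw [if_congr (show j+1+k = n+1 ↔ j+k = n by omega) rfl rfl]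
        rw [if_congr (show j-1 = k+(n+1) ↔ j = k+(n+2) by omega) rfl rfl]
        rw [if_congr (show k = j-1+(n+1) ↔ k = j+n by omega) rfl rfl]
        rw [if_congr (show j-1+k = n+1 ↔ j+k = n+2 by omega) rfl rfl]
        ring
    linarith [hfin]

/-- For the free Jacobi matrix `J₀` (unit off-diagonal, zero diagonal, indices
starting at `1` with index `0` as zero padding), all diagonal entries of
`T_ℓ((1/2)J₀)` with index `> ℓ` vanish, and the sum of the first `ℓ - 1`
diagonal entries equals `-(1/4)(1 + (-1)^ℓ)`. -/
theorem stmt_18 (ℓ : ℕ) (hℓ : 1 ≤ ℓ) (A : ℕ → ℕ → ℝ)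
    (hA : ∀ i j, A i j =
      if i ≠ 0 ∧ j ≠ 0 ∧ (i + 1 = j ∨ j + 1 = i) then (1 / 2 : ℝ) else 0) :
    (∀ j : ℕ, ℓ < j → matEval (Chebyshev.T ℝ ℓ) A j j = 0) ∧
    ∑ j ∈ Finset.Icc 1 (ℓ - 1), matEval (Chebyshev.T ℝ ℓ) A j j
      = -(1 / 4) * (1 + (-1 : ℝ) ^ ℓ) := by
  have hkey := key A hA
  constructor
  · intro j hj
    rw [hkey ℓ j j (by omega)]
    simp only [myE]
    rw [if_neg (show ¬(j = j + ℓ) by omega), if_neg (show ¬(j + j = ℓ) by omega)]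
    ring
  · have hc : ∀ j ∈ Finset.Icc 1 (ℓ-1),
        matEval (Chebyshev.T ℝ ℓ) A j j
          = -(1/2) * (if j + j = ℓ then (1:ℝ) else 0) := by
      intro j hj
      simp only [Finset.mem_Icc] at hj
      rw [hkey ℓ j j (by omega)]
      simp only [myE]
      rw [if_neg (show ¬(j = j + ℓ) by omega)]
      ring
    rw [Finset.sum_congr rfl hc]
    rcases Nat.even_or_odd ℓ with ⟨t, ht⟩ | hodd
    · have h1 : ∀ j ∈ Finset.Icc 1 (ℓ-1),
          -(1/2) * (if j + j = ℓ then (1:ℝ) else 0)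
            = if j = t then (-(1/2) : ℝ) else 0 := by
        intro j hj
        rcases eq_or_ne j t with rfl | h
        · rw [if_pos (by omega), if_pos rfl]; ring
        · rw [if_neg (by omega), if_neg h]; ring
      rw [Finset.sum_congr rfl h1, Finset.sum_ite_eq' (Finset.Icc 1 (ℓ-1)) t]
      rw [if_pos (by simp only [Finset.mem_Icc]; omega)]
      have : (-1:ℝ)^ℓ = 1 := Even.neg_one_pow ⟨t, ht⟩
      rw [this]; norm_num
    · have h1 : ∀ j ∈ Finset.Icc 1 (ℓ-1),
          -(1/2) * (if j + j = ℓ then (1:ℝ) else 0) = 0 := by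
        intro j hj
        rcases hodd with ⟨t, ht⟩
        rw [if_neg (by omega)]; ring
      rw [Finset.sum_congr rfl h1, Finset.sum_const_zero, hodd.neg_one_pow]
      ring
end

section
/- Let a_n ≡ 1 and suppose |b_n| ≤ δ_{1,n} (i.e., b_n = 0 for n ≥ 2 and |b_1| ≤ 1). Then the corresponding Jacobi matrix J has no eigenvalues outside [-2,2]. -/
/-- The Jacobi matrix with `a_n ≡ 1`, `|b_1| ≤ 1` and `b_n = 0` for `n ≥ 2`
has no eigenvalues outside `[-2,2]`.  Here sequences are indexed from `0`,
so `b 0` plays the role of `b_1`. -/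
theorem stmt_19 (b : ℕ → ℝ) (hb1 : |b 0| ≤ 1) (hb : ∀ n, 1 ≤ n → b n = 0)
    (E : ℝ) (hE : 2 < |E|) :
    ¬ ∃ ψ : ℕ → ℝ, ψ ≠ 0 ∧ Summable (fun n => ψ n ^ 2) ∧
      b 0 * ψ 0 + ψ 1 = E * ψ 0 ∧
      ∀ n : ℕ, ψ n + b (n + 1) * ψ (n + 1) + ψ (n + 2) = E * ψ (n + 1) := by
  rintro ⟨ψ, hne, hsum, h0, hrec⟩
  -- simplified recurrence
  have hrec' : ∀ n : ℕ, ψ (n + 2) = E * ψ (n + 1) - ψ n := by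
    intro n
    have := hrec n
    rw [hb (n + 1) (by omega)] at this
    linarith
  have hE2 : 4 < E ^ 2 := by nlinarith [sq_abs E, abs_nonneg E]
  set D := Real.sqrt (E ^ 2 - 4) with hDdef
  have hD2 : D ^ 2 = E ^ 2 - 4 := Real.sq_sqrt (by linarith)
  have hDpos : 0 < D := Real.sqrt_pos.2 (by linarith)
  have hDlt : D < |E| := by
    nlinarith [sq_abs E, abs_nonneg E, hDpos]
  set u : ℝ := (|E| + D) / 2 with hudef
  set v : ℝ := (|E| - D) / 2 with hvdef
  have hu1 : 1 < u := by simp only [hudef]; linarith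
  have hvpos : 0 < v := by simp only [hvdef]; linarith
  have huv : u * v = 1 := by
    simp only [hudef, hvdef]
    nlinarith [sq_abs E]
  have hv1 : v < 1 := by nlinarith
  set ε : ℝ := if 0 ≤ E then 1 else -1 with hεdef
  have hεE : ε * |E| = E := by
    by_cases h : 0 ≤ E
    · simp [hεdef, h, abs_of_nonneg h]
    · simp [hεdef, h, abs_of_neg (lt_of_not_ge h)]
  have hε2 : ε ^ 2 = 1 := by
    by_cases h : 0 ≤ E <;> simp [hεdef, h]
  have hεabs : |ε| = 1 := by
    by_cases h : 0 ≤ E <;> simp [hεdef, h]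
  set P : ℝ := ε * u with hPdef
  set Q : ℝ := ε * v with hQdef
  have huvE : u + v = |E| := by simp only [hudef, hvdef]; ring
  have hPQsum : P + Q = E := by
    calc P + Q = ε * (u + v) := by rw [hPdef, hQdef]; ring
      _ = ε * |E| := by rw [huvE]
      _ = E := hεE
  have hPQprod : P * Q = 1 := by
    simp only [hPdef, hQdef]
    nlinarith
  have hPabs : |P| = u := by
    rw [hPdef, abs_mul, hεabs, one_mul, abs_of_pos (by linarith)]
  have hQabs : |Q| = v := by
    rw [hQdef, abs_mul, hεabs, one_mul, abs_of_pos hvpos]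
  have hP1 : 1 < |P| := by rw [hPabs]; exact hu1
  have hQ1 : |Q| < 1 := by rw [hQabs]; exact hv1
  have hP2 : P ^ 2 = E * P - 1 := by
    linear_combination (-1 : ℝ) * hPQprod + P * hPQsum
  have hQ2 : Q ^ 2 = E * Q - 1 := by
    linear_combination (-1 : ℝ) * hPQprod + Q * hPQsum
  set Δ : ℝ := P - Q with hΔdef
  have hΔne : Δ ≠ 0 := by
    have : |Q| < |P| := lt_trans hQ1 hP1
    intro h
    rw [hΔdef, sub_eq_zero] at h
    rw [h] at this
    exact lt_irrefl _ this
  set A : ℝ := (ψ 1 - Q * ψ 0) / Δ with hAdef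
  set B : ℝ := (P * ψ 0 - ψ 1) / Δ with hBdef
  -- closed form
  have key : ∀ n : ℕ, ψ n = A * P ^ n + B * Q ^ n ∧
      ψ (n + 1) = A * P ^ (n + 1) + B * Q ^ (n + 1) := by
    intro n
    induction n with
    | zero =>
      constructor
      · simp only [pow_zero, mul_one, hAdef, hBdef]
        field_simp
        rw [hΔdef]
        ring
      · simp only [pow_one, hAdef, hBdef]
        field_simp
        rw [hΔdef]
        ring
    | succ n ih =>
      refine ⟨ih.2, ?_⟩
      rw [hrec' n, ih.1, ih.2]
      have e1 : P ^ (n + 1 + 1) = P ^ n * P ^ 2 := by ring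
      have e2 : Q ^ (n + 1 + 1) = Q ^ n * Q ^ 2 := by ring
      rw [e1, e2, hP2, hQ2]
      ring
  -- tendsto
  have habs0 : Filter.Tendsto (fun n => |ψ n|) Filter.atTop (nhds 0) := by
    have h1 := hsum.tendsto_atTop_zero
    have h2 : Filter.Tendsto (fun n => Real.sqrt (ψ n ^ 2)) Filter.atTop (nhds (Real.sqrt 0)) :=
      (Real.continuous_sqrt.tendsto 0).comp h1
    simpa [Real.sqrt_sq_eq_abs] using h2
  have hA0 : A = 0 := by
    by_contra hA
    have hApos : 0 < |A| := abs_pos.2 hA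
    have hQn : Filter.Tendsto (fun n : ℕ => |B| * |Q| ^ n) Filter.atTop (nhds 0) := by
      have := tendsto_pow_atTop_nhds_zero_of_lt_one (abs_nonneg Q) hQ1
      simpa using this.const_mul |B|
    have hR : Filter.Tendsto (fun n : ℕ => |ψ n| + |B| * |Q| ^ n) Filter.atTop (nhds 0) := by
      simpa using habs0.add hQn
    obtain ⟨n, hn⟩ := (hR.eventually (gt_mem_nhds hApos)).exists
    have hpow : (1 : ℝ) ≤ |P| ^ n := by
      calc (1 : ℝ) = 1 ^ n := (one_pow n).symm
        _ ≤ |P| ^ n := pow_le_pow_left₀ zero_le_one hP1.le n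
    have h1 : |A| ≤ |A| * |P| ^ n :=
      le_mul_of_one_le_right (abs_nonneg A) hpow
    have h2 : |A * P ^ n| = |A| * |P| ^ n := by
      rw [abs_mul, abs_pow]
    have h3 : A * P ^ n = ψ n - B * Q ^ n := by
      rw [(key n).1]; ring
    have h4 : |A * P ^ n| ≤ |ψ n| + |B| * |Q| ^ n := by
      rw [h3]
      calc |ψ n - B * Q ^ n| ≤ |ψ n| + |B * Q ^ n| := abs_sub _ _
        _ = |ψ n| + |B| * |Q| ^ n := by rw [abs_mul, abs_pow]
    rw [h2] at h4; linarith
  -- from A = 0 derive ψ 1 = Q * ψ 0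
  have hψ1 : ψ 1 = Q * ψ 0 := by
    have : ψ 1 - Q * ψ 0 = 0 := by
      have := hA0
      rw [hAdef, div_eq_zero_iff] at this
      tauto
    linarith
  -- boundary condition: (P - b 0) * ψ 0 = 0
  have hψ0 : ψ 0 = 0 := by
    have hfac : (P - b 0) * ψ 0 = 0 := by
      linear_combination ψ 0 * hPQsum + hψ1 - h0
    have hPne : P - b 0 ≠ 0 := by
      intro h
      rw [sub_eq_zero] at h
      rw [← h] at hb1
      linarith
    exact (mul_eq_zero.1 hfac).resolve_left hPne
  have hψ1' : ψ 1 = 0 := by rw [hψ1, hψ0, mul_zero]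
  have hB0 : B = 0 := by
    rw [hBdef, hψ0, hψ1']
    simp
  apply hne
  funext n
  have := (key n).1
  rw [hA0, hB0] at this
  simpa using this
end
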